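/- Given commuting derivations D_1,...,D_n of a commutative associative F-algebra A and a gl(n,F)-module V, the map π sending Σ_i a_i D_i ∈ W(n) to the operator Σ_{i,j} D_i(a_j) ⊗ E_{i,j} + Σ_i a_i D_i ⊗ Id_V on A ⊗_F V is a Lie algebra homomorphism, i.e., π([X,Y]) = [π(X), π(Y)] for all X, Y in the Lie algebra W(n) = {Σ a_i D_i | a_i ∈ A}. -/

import Mathlib

/-!
Write `π(a) = Φ(J a) + δ_a ⊗ 1`, where `J a = (D_i a_j)` is the Jacobian matrix, `δ_a = Σ a_i D_i`
and `Φ(M) = Σ M_ij ⊗ ρ(E_ij)` is the action of the current algebra `M_n(A) = A ⊗ gl(n)` on `A ⊗ V`.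
As `A` is commutative, `Φ` is a Lie homomorphism whenever `ρ` is, and `[δ ⊗ 1, Φ(M)] = Φ(δ M)` for
every derivation `δ`. Expanding `[π a, π b]` bilinearly, the theorem reduces to two identities that
hold because the `D_i` commute:
`[δ_a, δ_b] = δ_[a,b]` and `J [a,b] = [J a, J b] + δ_a (J b) - δ_b (J a)`.
-/

open TensorProduct

noncomputable section

variable (F : Type) [Field F] (n : ℕ)
variable (A : Type) [CommRing A] [Algebra F A]
variable (V : Type) [AddCommGroup V] [Module F V]

/-- Standard matrix units E_{i,j} of gl(n,F). -/
def EE (i j : Fin n) : Matrix (Fin n) (Fin n) F := Matrix.single i j 1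

/-- Shen's mixed product: the operator π(Σ a_i D_i) = Σ_{i,j} D_i(a_j) ⊗ E_{i,j} + Σ_i a_i D_i ⊗ Id
on A ⊗ V. -/
def mixedProduct (D : Fin n → Derivation F A A)
    (ρ : Matrix (Fin n) (Fin n) F →ₗ[F] Module.End F V) (a : Fin n → A) :
    Module.End F (A ⊗[F] V) :=
  (∑ i : Fin n, ∑ j : Fin n,
      TensorProduct.map (LinearMap.mulLeft F (D i (a j))) (ρ (EE F n i j))) +
  ∑ i : Fin n,
      TensorProduct.map (LinearMap.mulLeft F (a i) ∘ₗ (D i).toLinearMap) LinearMap.id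

namespace TensorProduct

variable {R S M : Type*} [CommRing R] [CommRing S] [Algebra R S] [AddCommGroup M] [Module R M]

theorem lie_map_mulLeft (u v : S) (f g : Module.End R M) :
    ⁅map (LinearMap.mulLeft R u) f, map (LinearMap.mulLeft R v) g⁆ =
      map (LinearMap.mulLeft R (u * v)) ⁅f, g⁆ := by
  ext c x
  simp [Ring.lie_def, tmul_sub, mul_left_comm u v]

end TensorProduct

namespace LinearMap

variable {R M N : Type*} [CommRing R] [AddCommGroup M] [Module R M] [AddCommGroup N] [Module R N]

theorem lie_rTensor (f g : Module.End R M) :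
    ⁅f.rTensor N, g.rTensor N⁆ = ⁅f, g⁆.rTensor N := by
  simp only [Ring.lie_def, rTensor_sub, rTensor_mul]

end LinearMap

namespace Derivation

variable {R S M : Type*} [CommRing R] [CommRing S] [Algebra R S] [AddCommGroup M] [Module R M]

theorem lie_rTensor_map_mulLeft (d : Derivation R S S) (u : S) (f : Module.End R M) :
    ⁅(d : Module.End R S).rTensor M, TensorProduct.map (LinearMap.mulLeft R u) f⁆ =
      TensorProduct.map (LinearMap.mulLeft R (d u)) f := by
  ext c x
  simp [Ring.lie_def, leibniz, ← TensorProduct.sub_tmul, mul_comm c]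

theorem apply_comm_of_commutator_eq_zero {D₁ D₂ : Derivation R S S} (h : ⁅D₁, D₂⁆ = 0) (u : S) :
    D₁ (D₂ u) = D₂ (D₁ u) := by
  rw [← sub_eq_zero, ← commutator_apply, h, zero_apply]

end Derivation

namespace MixedProduct

section CurrentAlgebra

variable {R S B M : Type*} [CommRing R] [CommRing S] [Algebra R S] [Ring B] [Algebra R B]
  [AddCommGroup M] [Module R M]

def currentRep (ρ : B →ₗ[R] Module.End R M) : S ⊗[R] B →ₗ[R] Module.End R (S ⊗[R] M) :=
  lift ((mapBilinear (RingHom.id R) S M S M).compl₁₂ (LinearMap.mul R S) ρ)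

theorem currentRep_tmul (ρ : B →ₗ[R] Module.End R M) (u : S) (X : B) :
    currentRep ρ (u ⊗ₜ X) = map (LinearMap.mulLeft R u) (ρ X) :=
  rfl

theorem currentRep_mul_sub_mul {ρ : B →ₗ[R] Module.End R M} (hρ : ∀ X Y, ρ ⁅X, Y⁆ = ⁅ρ X, ρ Y⁆)
    (t s : S ⊗[R] B) : currentRep ρ (t * s - s * t) = ⁅currentRep ρ t, currentRep ρ s⁆ := by
  let : LieRing (Module.End R (S ⊗[R] M)) := LieRing.ofAssociativeRing
  induction t using TensorProduct.induction_on with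
  | zero => simp
  | add t₁ t₂ h₁ h₂ => rw [add_mul, mul_add, add_sub_add_comm, map_add, h₁, h₂, map_add, add_lie]
  | tmul u X =>
    induction s using TensorProduct.induction_on with
    | zero => simp
    | add s₁ s₂ h₁ h₂ => rw [add_mul, mul_add, add_sub_add_comm, map_add, h₁, h₂, map_add, lie_add]
    | tmul v Y =>
      rw [Algebra.TensorProduct.tmul_mul_tmul, Algebra.TensorProduct.tmul_mul_tmul, mul_comm v u,
        ← tmul_sub, currentRep_tmul, currentRep_tmul, currentRep_tmul, lie_map_mulLeft, ← hρ,
        Ring.lie_def]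

end CurrentAlgebra

section MatrixAlgebra

variable {R S ι M : Type*} [CommRing R] [CommRing S] [Algebra R S] [Fintype ι] [DecidableEq ι]
  [AddCommGroup M] [Module R M] (ρ : Matrix ι ι R →ₗ[R] Module.End R M)

def matrixRep : Matrix ι ι S →ₗ[R] Module.End R (S ⊗[R] M) :=
  currentRep ρ ∘ₗ (matrixEquivTensor ι R S).toLinearMap

theorem matrixRep_apply (N : Matrix ι ι S) :
    matrixRep ρ N = ∑ i, ∑ j, map (LinearMap.mulLeft R (N i j)) (ρ (Matrix.single i j 1)) := by
  simp [matrixRep, matrixEquivTensor_apply, Fintype.sum_prod_type, currentRep_tmul]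

theorem matrixRep_lie {ρ : Matrix ι ι R →ₗ[R] Module.End R M} (hρ : ∀ X Y, ρ ⁅X, Y⁆ = ⁅ρ X, ρ Y⁆)
    (N P : Matrix ι ι S) : matrixRep ρ ⁅N, P⁆ = ⁅matrixRep ρ N, matrixRep ρ P⁆ := by
  change currentRep ρ (matrixEquivTensor ι R S ⁅N, P⁆) =
    ⁅currentRep ρ (matrixEquivTensor ι R S N), currentRep ρ (matrixEquivTensor ι R S P)⁆
  rw [← currentRep_mul_sub_mul hρ, Ring.lie_def, map_sub, map_mul, map_mul]

theorem lie_rTensor_matrixRep (d : Derivation R S S) (N : Matrix ι ι S) :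
    ⁅(d : Module.End R S).rTensor M, matrixRep ρ N⁆ = matrixRep ρ (N.map d) := by
  let : LieRing (Module.End R (S ⊗[R] M)) := LieRing.ofAssociativeRing
  simp only [matrixRep_apply, lie_sum, Derivation.lie_rTensor_map_mulLeft, Matrix.map_apply]

end MatrixAlgebra

section VectorFields

variable {R S ι : Type*} [CommRing R] [CommRing S] [Algebra R S] [Fintype ι]
  (D : ι → Derivation R S S)

def vectorField (a : ι → S) : Derivation R S S := ∑ i, a i • D i

theorem vectorField_apply (a : ι → S) (u : S) : vectorField D a u = ∑ i, a i * D i u := by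
  simp only [vectorField, ← Derivation.coeFnAddMonoidHom_apply, map_sum, Finset.sum_apply]
  simp only [Derivation.coeFnAddMonoidHom_apply, Derivation.smul_apply, smul_eq_mul]

def fieldBracket (a b : ι → S) : ι → S := fun i => ∑ j, (a j * D j (b i) - b j * D j (a i))

def jacobian (a : ι → S) : Matrix ι ι S := Matrix.of fun i j => D i (a j)

variable {D}

theorem vectorField_fieldBracket (hD : ∀ i j, ⁅D i, D j⁆ = 0) (a b : ι → S) :
    vectorField D (fieldBracket D a b) = ⁅vectorField D a, vectorField D b⁆ := by
  ext u
  have second_order :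
      ∑ j, ∑ i, b j * (a i * D i (D j u)) = ∑ j, ∑ i, a j * (b i * D i (D j u)) := by
    rw [Finset.sum_comm]
    refine Finset.sum_congr rfl fun j _ => Finset.sum_congr rfl fun i _ => ?_
    rw [Derivation.apply_comm_of_commutator_eq_zero (hD i j)]
    ring
  simp only [vectorField_apply, fieldBracket, Derivation.commutator_apply, map_sum,
    Derivation.leibniz, smul_eq_mul, Finset.mul_sum, Finset.sum_mul, sub_mul,
    Finset.sum_add_distrib, Finset.sum_sub_distrib]
  rw [second_order, add_sub_add_left_eq_sub]
  congr 1 <;> exact Finset.sum_congr rfl fun _ _ => Finset.sum_congr rfl fun _ _ => by ring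

theorem jacobian_fieldBracket (hD : ∀ i j, ⁅D i, D j⁆ = 0) (a b : ι → S) :
    jacobian D (fieldBracket D a b) = ⁅jacobian D a, jacobian D b⁆ +
      (jacobian D b).map (vectorField D a) - (jacobian D a).map (vectorField D b) := by
  ext i j
  simp only [jacobian, fieldBracket, Ring.lie_def, Matrix.sub_apply, Matrix.add_apply,
    Matrix.mul_apply, Matrix.map_apply, Matrix.of_apply, vectorField_apply, map_sum, map_sub,
    Derivation.leibniz, smul_eq_mul, ← Finset.sum_sub_distrib, ← Finset.sum_add_distrib]
  refine Finset.sum_congr rfl fun k _ => ?_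
  simp only [Derivation.apply_comm_of_commutator_eq_zero (hD i k)]
  ring

end VectorFields

theorem mixedProduct_eq (D : Fin n → Derivation F A A)
    (ρ : Matrix (Fin n) (Fin n) F →ₗ[F] Module.End F V) (a : Fin n → A) :
    mixedProduct F n A V D ρ a =
      matrixRep ρ (jacobian D a) + (vectorField D a : Module.End F A).rTensor V := by
  rw [mixedProduct, matrixRep_apply]
  congr 1
  ext c x
  simp [vectorField_apply, sum_tmul]

end MixedProduct

open MixedProduct

theorem mixedProduct_is_lie_hom
    (D : Fin n → Derivation F A A)
    (hD : ∀ i j : Fin n, ⁅D i, D j⁆ = 0)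
    (ρ : Matrix (Fin n) (Fin n) F →ₗ[F] Module.End F V)
    (hρ : ∀ X Y : Matrix (Fin n) (Fin n) F, ρ ⁅X, Y⁆ = ⁅ρ X, ρ Y⁆)
    (a b : Fin n → A) :
    mixedProduct F n A V D ρ (fun i => ∑ j : Fin n, (a j * D j (b i) - b j * D j (a i))) =
      ⁅mixedProduct F n A V D ρ a, mixedProduct F n A V D ρ b⁆ := by
  change mixedProduct F n A V D ρ (fieldBracket D a b) = _
  simp only [mixedProduct_eq]
  rw [jacobian_fieldBracket hD, vectorField_fieldBracket hD, Derivation.commutator_coe_linear_map,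
    ← LinearMap.lie_rTensor, map_sub, map_add, matrixRep_lie hρ, ← lie_rTensor_matrixRep,
    ← lie_rTensor_matrixRep]
  simp only [Ring.lie_def]
  noncomm_ring
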